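/- arXiv:2301.03371 — 2 statements merged into one kernel-verified Lean document; each statement's English description precedes it below -/
import Mathlib

section
/- Let p ≥ 0 be a real number. Then for every real t with |t| ≤ 1/4, exp(−p·t) ≤ (1 − 2t)^{p/2} · exp(2p·t²); equivalently, exp(−p·t)/(1 − 2t)^{p/2} ≤ exp(2p·t²). -/
open Real

/-- For `u ≤ 0`, `1 + v ≤ exp v` suffices since `(1 - u)(1 + u + u²) = 1 - u³ ≥ 1`;
for `u ≥ 0` the quadratic bound `1 + v + v²/2 ≤ exp v` is needed. -/
lemma one_le_one_sub_mul_exp_add_sq {u : ℝ} (hu : u ≤ 1 / 2) : 1 ≤ (1 - u) * exp (u + u ^ 2) := by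
  have h1u : 0 ≤ 1 - u := by linarith
  rcases le_total u 0 with hneg | hnonneg
  · calc 1 ≤ (1 - u) * (u + u ^ 2 + 1) := by nlinarith [pow_two_nonneg u]
      _ ≤ (1 - u) * exp (u + u ^ 2) := by gcongr; exact add_one_le_exp _
  · calc 1 ≤ (1 - u) * (1 + (u + u ^ 2) + (u + u ^ 2) ^ 2 / 2) := by
          nlinarith [mul_nonneg (mul_nonneg hnonneg hnonneg) (mul_nonneg hnonneg h1u),
            mul_nonneg (pow_two_nonneg u) (by linarith : (0 : ℝ) ≤ 1 - 2 * u)]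
      _ ≤ (1 - u) * exp (u + u ^ 2) := by
          gcongr; exact quadratic_le_exp_of_nonneg (by positivity)

lemma neg_sub_sq_le_log_one_sub {u : ℝ} (hu : u ≤ 1 / 2) : -u - u ^ 2 ≤ log (1 - u) := by
  have h1u : 0 < 1 - u := by linarith
  rw [le_log_iff_exp_le h1u, show -u - u ^ 2 = -(u + u ^ 2) by ring, exp_neg,
    inv_le_iff_one_le_mul₀ (exp_pos _)]
  exact one_le_one_sub_mul_exp_add_sq hu

lemma exp_neg_mul_le_rpow_mul_exp {p t : ℝ} (hp : 0 ≤ p) (ht : t ≤ 1 / 4) :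
    exp (-p * t) ≤ (1 - 2 * t) ^ (p / 2) * exp (2 * p * t ^ 2) := by
  have hlog := mul_le_mul_of_nonneg_left (neg_sub_sq_le_log_one_sub (u := 2 * t) (by linarith))
    (by positivity : 0 ≤ p / 2)
  rw [rpow_def_of_pos (by linarith), ← exp_add, exp_le_exp]
  linarith

/-- inequality (MGF2) in the proof of the paper's Lemma 3. For
`p ≥ 0` and `|t| ≤ 1/4`, `exp(−p t) ≤ (1 − 2t)^{p/2} exp(2 p t²)`; equivalently
`exp(−p t)/(1 − 2t)^{p/2} ≤ exp(2 p t²)`. -/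
theorem central_chisq_mgf_bound (p : ℝ) (hp : 0 ≤ p) :
    ∀ t : ℝ, |t| ≤ 1 / 4 →
      Real.exp (-p * t) ≤ (1 - 2 * t) ^ (p / 2) * Real.exp (2 * p * t ^ 2) ∧
      Real.exp (-p * t) / (1 - 2 * t) ^ (p / 2) ≤ Real.exp (2 * p * t ^ 2) := by
  intro t ht
  have ht' : t ≤ 1 / 4 := (abs_le.1 ht).2
  have hbound := exp_neg_mul_le_rpow_mul_exp hp ht'
  have hpos : 0 < (1 - 2 * t) ^ (p / 2) := rpow_pos_of_pos (by linarith) _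
  exact ⟨hbound, (div_le_iff₀ hpos).2 (hbound.trans_eq (mul_comm _ _))⟩
end

section
/- Define sinc(x) = sin(x)/x for x ≠ 0 and sinc(0) = 1, let H(β1, β2) = C·sinc(K_x·π·(α1 − β1))·sinc(K_y·π·(α2 − β2)) with C a nonzero complex constant, K_x, K_y > 0, α1, α2 real, and let μ(β1, β2) = P·|H(β1, β2)|² + σ² with P > 0 and σ² > 0. Let β1⁰, β2⁰, v be reals such that K_x·v is a positive integer, v ≠ 0, c := α1 − β1⁰ satisfies c ∉ {0, v, −v, v/2, −v/2}, sin(K_x·π·c) ≠ 0, and sinc(K_y·π·(α2 − β2⁰)) ≠ 0. Set r₊ = √((μ(β1⁰, β2⁰) − σ²)/(μ(β1⁰ + v, β2⁰) − σ²)) and r₋ = √((μ(β1⁰, β2⁰) − σ²)/(μ(β1⁰ − v, β2⁰) − σ²)). Then the intersection of the sets {β1⁰ + v/(1 + r₊), β1⁰ + v/(1 − r₊)} and {β1⁰ − v/(1 + r₋), β1⁰ − v/(1 − r₋)} equals exactly {α1}; in particular, α1 is uniquely recovered from the three noiseless mean values μ(β1⁰, β2⁰), μ(β1⁰ + v, β2⁰),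 μ(β1⁰ − v, β2⁰). -/
/-! Because `Kₓ·v` is an integer, shifting `β1` by `±v` shifts the argument of the sine by a
multiple of `π`, so `|sin|` is unchanged and `μ − σ²` changes only through the `1/x²` factor of
sinc: `r± = |1 ∓ v/c|` with `c = α1 − β1⁰`. Whatever the sign of `1 ∓ v/c`, each pair of
candidates therefore consists of `α1` and one spurious point, and the two spurious points differ
because the reciprocals of their offsets from `β1⁰` differ by `4/v`. -/

open Real

/-- `sinc x = sin x / x` for `x ≠ 0` and `sinc 0 = 1`. -/
noncomputable def sinc (x : ℝ) : ℝ := if x = 0 then 1 else Real.sin x / x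

theorem sinc_eq_real_sinc : _root_.sinc = Real.sinc := rfl

theorem Real.sq_sin_sub_int_mul_pi (x : ℝ) (n : ℤ) : sin (x - n * π) ^ 2 = sin x ^ 2 := by
  rw [sin_sub_int_mul_pi, mul_pow, ← sq_abs ((-1 : ℝ) ^ n), abs_zpow, abs_neg, abs_one, one_zpow,
    one_pow, one_mul]

theorem Real.sinc_sq_div_sinc_sq {x y : ℝ} (hx : sin x ≠ 0) (hxy : sin y ^ 2 = sin x ^ 2) :
    Real.sinc x ^ 2 / Real.sinc y ^ 2 = (y / x) ^ 2 := by
  have hy : sin y ≠ 0 := by rw [← pow_ne_zero_iff two_ne_zero, hxy]; exact pow_ne_zero 2 hx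
  have hx0 : x ≠ 0 := by rintro rfl; simp at hx
  have hy0 : y ≠ 0 := by rintro rfl; simp at hy
  rw [Real.sinc_of_ne_zero hx0, Real.sinc_of_ne_zero hy0]
  field_simp
  rw [hxy]

theorem Real.sqrt_sinc_sq_div_sinc_sq_sub {A k c w : ℝ} (hA : A ≠ 0) (hsin : sin (k * c) ≠ 0)
    (hkw : ∃ n : ℤ, k * w = n * π) :
    √(A * Real.sinc (k * c) ^ 2 / (A * Real.sinc (k * (c - w)) ^ 2)) = |1 - w / c| := by
  obtain ⟨n, hn⟩ := hkw
  obtain ⟨hk, hc⟩ : k ≠ 0 ∧ c ≠ 0 := mul_ne_zero_iff.mp (by rintro h; simp [h] at hsin)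
  have hsq : sin (k * (c - w)) ^ 2 = sin (k * c) ^ 2 := by
    rw [mul_sub, hn, sq_sin_sub_int_mul_pi]
  rw [mul_div_mul_left _ _ hA, sinc_sq_div_sinc_sq hsin hsq, sqrt_sq_eq_abs,
    mul_div_mul_left _ _ hk, sub_div, div_self hc]

theorem Set.pair_one_add_abs_one_sub_abs {α : Type*} (f : ℝ → α) (s : ℝ) :
    ({f (1 + |s|), f (1 - |s|)} : Set α) = {f (1 + s), f (1 - s)} := by
  rcases abs_cases s with ⟨hs, -⟩ | ⟨hs, -⟩
  · rw [hs]
  · rw [hs, sub_neg_eq_add, ← sub_eq_add_neg, Set.pair_comm]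

theorem div_ne_neg_div {v a b : ℝ} (hv : v ≠ 0) (hab : a + b ≠ 0) : v / a ≠ -(v / b) := by
  intro h
  have h' := congrArg (fun t => v * t⁻¹) h
  simp only [inv_div, inv_neg, mul_neg, mul_div_cancel₀ _ hv] at h'
  exact hab (by linarith)

theorem Set.pair_inter_pair_of_ne {α : Type*} {x p q : α} (h : p ≠ q) :
    ({p, x} ∩ {q, x} : Set α) = {x} := by
  rw [Set.pair_comm, Set.pair_comm q, ← Set.insert_inter_distrib,
    Set.singleton_inter_eq_empty.mpr (by simpa using h), insert_empty_eq]

theorem alpha1_uniquely_recovered_general (C : ℂ) (hC : C ≠ 0) (Kx Ky α1 α2 P σ2 : ℝ)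
    (hP : 0 < P)
    (H : ℝ → ℝ → ℂ)
    (hH : ∀ β1 β2, H β1 β2 =
      C * (_root_.sinc (Kx * π * (α1 - β1)) : ℝ) * (_root_.sinc (Ky * π * (α2 - β2)) : ℝ))
    (μf : ℝ → ℝ → ℝ)
    (hμf : ∀ β1 β2, μf β1 β2 = P * ‖H β1 β2‖ ^ 2 + σ2)
    (β1₀ β2₀ v : ℝ) (hvne : v ≠ 0)
    (hv : ∃ m : ℕ, 0 < m ∧ Kx * v = m)
    (h3 : Real.sin (Kx * π * (α1 - β1₀)) ≠ 0)
    (h4 : _root_.sinc (Ky * π * (α2 - β2₀)) ≠ 0)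
    (rp rm : ℝ)
    (hrp : rp = Real.sqrt ((μf β1₀ β2₀ - σ2) / (μf (β1₀ + v) β2₀ - σ2)))
    (hrm : rm = Real.sqrt ((μf β1₀ β2₀ - σ2) / (μf (β1₀ - v) β2₀ - σ2))) :
    ({β1₀ + v / (1 + rp), β1₀ + v / (1 - rp)} : Set ℝ)
        ∩ ({β1₀ - v / (1 + rm), β1₀ - v / (1 - rm)} : Set ℝ)
      = {α1} := by
  obtain ⟨m, -, hm⟩ := hv
  set c := α1 - β1₀ with hc
  set A := P * ‖C‖ ^ 2 * Real.sinc (Ky * π * (α2 - β2₀)) ^ 2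
  have hA : A ≠ 0 := by rw [sinc_eq_real_sinc] at h4; positivity
  have hmean : ∀ β1, μf β1 β2₀ - σ2 = A * Real.sinc (Kx * π * (α1 - β1)) ^ 2 := by
    intro β1
    simp only [hμf, hH, sinc_eq_real_sinc, norm_mul, Complex.norm_real, norm_eq_abs, mul_pow,
      sq_abs, add_sub_cancel_right, A]
    ring
  have hratio : ∀ w : ℝ, (∃ n : ℤ, Kx * π * w = n * π) →
      √((μf β1₀ β2₀ - σ2) / (μf (β1₀ + w) β2₀ - σ2)) = |1 - w / c| := by
    intro w hw
    rw [hmean, hmean, show α1 - (β1₀ + w) = c - w by ring]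
    exact sqrt_sinc_sq_div_sinc_sq_sub hA h3 hw
  have hrp' : rp = |1 - v / c| := hrp ▸ hratio v ⟨m, by rw [mul_right_comm, hm]; norm_cast⟩
  have hrm' : rm = |1 - -v / c| := by
    rw [hrm, sub_eq_add_neg]
    exact hratio (-v) ⟨-m, by rw [mul_neg, mul_right_comm, hm]; push_cast; ring⟩
  rw [hrp', hrm', Set.pair_one_add_abs_one_sub_abs (fun r => β1₀ + v / r),
    Set.pair_one_add_abs_one_sub_abs (fun r => β1₀ - v / r)]
  have hplus : β1₀ + v / (1 - (1 - v / c)) = α1 := by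
    rw [sub_sub_cancel, div_div_cancel₀ hvne, hc]; ring
  have hminus : β1₀ - v / (1 - (1 - -v / c)) = α1 := by
    rw [sub_sub_cancel, neg_div, div_neg, div_div_cancel₀ hvne, hc]; ring
  rw [hplus, hminus]
  exact Set.pair_inter_pair_of_ne fun h =>
    div_ne_neg_div (a := 1 + (1 - v / c)) (b := 1 + (1 - -v / c)) hvne
      (by ring_nf; norm_num) (by linarith)

/-- the paper's Theorem 1 for `α1`, with uniqueness. With
`H(β1,β2) = C·sinc(Kₓπ(α1−β1))·sinc(K_yπ(α2−β2))` (`C ≠ 0`, `Kₓ, K_y > 0`) and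
`μ(β1,β2) = P|H(β1,β2)|² + σ²` (`P, σ² > 0`), if `Kₓ·v` is a positive integer,
`v ≠ 0`, `c := α1 − β1⁰ ∉ {0, v, −v, v/2, −v/2}`, `sin(Kₓπc) ≠ 0` and
`sinc(K_yπ(α2 − β2⁰)) ≠ 0`, then with
`r₊ = √((μ(β1⁰,β2⁰) − σ²)/(μ(β1⁰+v,β2⁰) − σ²))` and
`r₋ = √((μ(β1⁰,β2⁰) − σ²)/(μ(β1⁰−v,β2⁰) − σ²))`, the intersection
`{β1⁰ + v/(1+r₊), β1⁰ + v/(1−r₊)} ∩ {β1⁰ − v/(1+r₋), β1⁰ − v/(1−r₋)}` equals `{α1}`. -/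
theorem alpha1_uniquely_recovered (C : ℂ) (hC : C ≠ 0) (Kx Ky α1 α2 P σ2 : ℝ)
    (hKx : 0 < Kx) (hKy : 0 < Ky) (hP : 0 < P) (hσ2 : 0 < σ2)
    (H : ℝ → ℝ → ℂ)
    (hH : ∀ β1 β2, H β1 β2 =
      C * (_root_.sinc (Kx * π * (α1 - β1)) : ℝ) * (_root_.sinc (Ky * π * (α2 - β2)) : ℝ))
    (μf : ℝ → ℝ → ℝ)
    (hμf : ∀ β1 β2, μf β1 β2 = P * ‖H β1 β2‖ ^ 2 + σ2)
    (β1₀ β2₀ v : ℝ) (hvne : v ≠ 0)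
    (hv : ∃ m : ℕ, 0 < m ∧ Kx * v = m)
    (hc0 : α1 - β1₀ ≠ 0) (hcv : α1 - β1₀ ≠ v) (hcv' : α1 - β1₀ ≠ -v)
    (hcv2 : α1 - β1₀ ≠ v / 2) (hcv2' : α1 - β1₀ ≠ -v / 2)
    (h3 : Real.sin (Kx * π * (α1 - β1₀)) ≠ 0)
    (h4 : _root_.sinc (Ky * π * (α2 - β2₀)) ≠ 0)
    (rp rm : ℝ)
    (hrp : rp = Real.sqrt ((μf β1₀ β2₀ - σ2) / (μf (β1₀ + v) β2₀ - σ2)))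
    (hrm : rm = Real.sqrt ((μf β1₀ β2₀ - σ2) / (μf (β1₀ - v) β2₀ - σ2))) :
    ({β1₀ + v / (1 + rp), β1₀ + v / (1 - rp)} : Set ℝ)
        ∩ ({β1₀ - v / (1 + rm), β1₀ - v / (1 - rm)} : Set ℝ)
      = {α1} :=
  alpha1_uniquely_recovered_general C hC Kx Ky α1 α2 P σ2 hP H hH μf hμf β1₀ β2₀ v hvne hv h3 h4 rp
    rm hrp hrm
end
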